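/- Complementary slackness: if u* ∈ U(X,S) and feasible γ* achieve equality ∫ u* dμ = ∫ ℓ_S dγ*, then ∫ u* dμ = ∫ u* d(γ₁* − γ₂*) and ℓ_S(x,y) = u*(x) − u*(y) for γ*-almost every (x,y). -/

import Mathlib

open MeasureTheory

/-- `u` is a feasible mechanism: convex on `X` with a subgradient in `S` at
every point of `X`. -/
def MemU {n : ℕ} (X S : Set (Fin n → ℝ)) (u : (Fin n → ℝ) → ℝ) : Prop :=
  ConvexOn ℝ X u ∧ ∀ y ∈ X, ∃ s ∈ S, ∀ x ∈ X, u y + ∑ i, s i * (x i - y i) ≤ u x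

/-- `ℓ_S(x,y) = sup_{s ∈ S} s · (x - y)`. -/
noncomputable def ellS {n : ℕ} (S : Set (Fin n → ℝ)) (x y : Fin n → ℝ) : ℝ :=
  sSup {r : ℝ | ∃ s ∈ S, r = ∑ i, s i * (x i - y i)}

/-!
A subgradient `s ∈ S` of `u*` at `x` gives `u*(x) - u*(y) ≤ s · (x - y) ≤ ℓ_S(x,y)` on `X`.
Integrating against `γ*` and using feasibility,
`∫ u* dμ ≤ ∫ u* d(γ₁* − γ₂*) = ∫ (u*(x) - u*(y)) dγ* ≤ ∫ ℓ_S dγ* = ∫ u* dμ`,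
so all of these are equal, and the nonnegative gap `ℓ_S(x,y) - (u*(x) - u*(y))` has
`γ*`-integral zero, hence vanishes `γ*`-a.e. The integrals make sense because `ℓ_S` is
continuous for compact `S`, which in turn makes `u*` continuous on `X`.
-/

open Filter Topology

lemma continuousOn_of_sub_le {α : Type*} [TopologicalSpace α] {K : Set α} {f : α → ℝ}
    {L : α → α → ℝ} (hL : Continuous (Function.uncurry L)) (hdiag : ∀ x, L x x = 0)
    (hfL : ∀ x ∈ K, ∀ y ∈ K, f x - f y ≤ L x y) : ContinuousOn f K := by
  intro x hx
  have hlower : Tendsto (fun y => f x - L x y) (𝓝[K] x) (𝓝 (f x)) := by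
    simpa [hdiag] using (tendsto_const_nhds.sub
      ((hL.comp (Continuous.prodMk_right x)).tendsto x)).mono_left nhdsWithin_le_nhds
  have hupper : Tendsto (fun y => f x + L y x) (𝓝[K] x) (𝓝 (f x)) := by
    simpa [hdiag] using (tendsto_const_nhds.add
      ((hL.comp (Continuous.prodMk_left x)).tendsto x)).mono_left nhdsWithin_le_nhds
  refine tendsto_of_tendsto_of_tendsto_of_le_of_le' hlower hupper ?_ ?_ <;>
    filter_upwards [self_mem_nhdsWithin] with y hy
  · linarith [hfL x hx y hy]
  · linarith [hfL y hy x hx]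

lemma ContinuousOn.integrable_of_ae_mem {α : Type*} [TopologicalSpace α] [T2Space α]
    [MeasurableSpace α] [OpensMeasurableSpace α] {ν : Measure α} [IsFiniteMeasure ν]
    {K : Set α} {f : α → ℝ} (hK : IsCompact K) (hf : ContinuousOn f K)
    (hν : ∀ᵐ x ∂ν, x ∈ K) : Integrable f ν := by
  rw [← Measure.restrict_eq_self_of_ae_mem hν]
  exact hf.integrableOn_compact hK

lemma integral_map_fst_sub_integral_map_snd {α : Type*} [MeasurableSpace α]
    {γ : Measure (α × α)} {f : α → ℝ} (h₁ : Integrable f (γ.map Prod.fst))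
    (h₂ : Integrable f (γ.map Prod.snd)) :
    (∫ x, f x ∂(γ.map Prod.fst)) - (∫ x, f x ∂(γ.map Prod.snd)) =
      ∫ p, (f p.1 - f p.2) ∂γ := by
  rw [integral_map measurable_fst.aemeasurable h₁.aestronglyMeasurable,
    integral_map measurable_snd.aemeasurable h₂.aestronglyMeasurable]
  exact (integral_sub (h₁.comp_measurable measurable_fst)
    (h₂.comp_measurable measurable_snd)).symm

section ellS

variable {n : ℕ} {S : Set (Fin n → ℝ)}

lemma ellS_eq_sSup_image (x y : Fin n → ℝ) :
    ellS S x y = sSup ((fun s => s ⬝ᵥ (x - y)) '' S) := by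
  unfold ellS
  congr 1
  ext r
  simp [dotProduct, eq_comm]

lemma continuous_uncurry_ellS (hS : IsCompact S) : Continuous (Function.uncurry (ellS S)) := by
  simp_rw [Function.uncurry_def, ellS_eq_sSup_image]
  exact hS.continuous_sSup (f := fun (p : (Fin n → ℝ) × (Fin n → ℝ)) s => s ⬝ᵥ (p.1 - p.2))
    (by fun_prop)

lemma ellS_self (x : Fin n → ℝ) : ellS S x x = 0 := by
  rcases S.eq_empty_or_nonempty with rfl | hS
  · simp [ellS_eq_sSup_image]
  · simp [ellS_eq_sSup_image, hS.image_const]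

lemma dotProduct_le_ellS (hS : IsCompact S) {s : Fin n → ℝ} (hs : s ∈ S) (x y : Fin n → ℝ) :
    s ⬝ᵥ (x - y) ≤ ellS S x y := by
  rw [ellS_eq_sSup_image]
  exact le_csSup (hS.bddAbove_image (by fun_prop)) ⟨s, hs, rfl⟩

end ellS

namespace MemU

variable {n : ℕ} {X S : Set (Fin n → ℝ)} {u : (Fin n → ℝ) → ℝ}

lemma sub_le_ellS (hu : MemU X S u) (hS : IsCompact S) {x y : Fin n → ℝ} (hx : x ∈ X)
    (hy : y ∈ X) : u x - u y ≤ ellS S x y := by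
  obtain ⟨s, hsS, hs⟩ := hu.2 x hx
  have hsub : u x + s ⬝ᵥ (y - x) ≤ u y := hs y hy
  rw [← neg_sub x y, dotProduct_neg] at hsub
  exact (by linarith : u x - u y ≤ s ⬝ᵥ (x - y)).trans (dotProduct_le_ellS hS hsS x y)

lemma continuousOn (hu : MemU X S u) (hS : IsCompact S) : ContinuousOn u X :=
  continuousOn_of_sub_le (continuous_uncurry_ellS hS) ellS_self fun _ hx _ hy =>
    hu.sub_le_ellS hS hx hy

end MemU

theorem complementary_slackness_general {n : ℕ} (X S : Set (Fin n → ℝ))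
    (hX : IsCompact X)
    (hScl : IsClosed S) (hSb : Bornology.IsBounded S)
    (μp μm : Measure (Fin n → ℝ))
    (ustar : (Fin n → ℝ) → ℝ) (hu : MemU X S ustar)
    (γ : Measure ((Fin n → ℝ) × (Fin n → ℝ))) [IsFiniteMeasure γ]
    (hγX : γ (X ×ˢ X)ᶜ = 0)
    (hdom : ∀ v : (Fin n → ℝ) → ℝ, MemU X S v →
      (∫ x, v x ∂(γ.map Prod.fst)) - (∫ x, v x ∂(γ.map Prod.snd)) ≥
        (∫ x, v x ∂μp) - (∫ x, v x ∂μm))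
    (heq : (∫ x, ustar x ∂μp) - (∫ x, ustar x ∂μm) = ∫ p, ellS S p.1 p.2 ∂γ) :
    ((∫ x, ustar x ∂μp) - (∫ x, ustar x ∂μm) =
      (∫ x, ustar x ∂(γ.map Prod.fst)) - (∫ x, ustar x ∂(γ.map Prod.snd))) ∧
    (∀ᵐ p ∂γ, ellS S p.1 p.2 = ustar p.1 - ustar p.2) := by
  have hS : IsCompact S := Metric.isCompact_of_isClosed_isBounded hScl hSb
  have hu_cont : ContinuousOn ustar X := hu.continuousOn hS
  have hγ : ∀ᵐ p ∂γ, p ∈ X ×ˢ X := mem_ae_iff.mpr hγX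
  have hγ₁ : ∀ᵐ x ∂γ.map Prod.fst, x ∈ X :=
    (ae_map_iff measurable_fst.aemeasurable hX.measurableSet).mpr (hγ.mono fun _ hp => hp.1)
  have hγ₂ : ∀ᵐ x ∂γ.map Prod.snd, x ∈ X :=
    (ae_map_iff measurable_snd.aemeasurable hX.measurableSet).mpr (hγ.mono fun _ hp => hp.2)
  have hdiff := integral_map_fst_sub_integral_map_snd (hu_cont.integrable_of_ae_mem hX hγ₁)
    (hu_cont.integrable_of_ae_mem hX hγ₂)
  have hle : (fun p => ustar p.1 - ustar p.2) ≤ᵐ[γ] fun p => ellS S p.1 p.2 :=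
    hγ.mono fun p hp => hu.sub_le_ellS hS hp.1 hp.2
  have hint_diff : Integrable (fun p => ustar p.1 - ustar p.2) γ :=
    ((hu_cont.comp continuousOn_fst fun _ hp => hp.1).sub
      (hu_cont.comp continuousOn_snd fun _ hp => hp.2)).integrable_of_ae_mem (hX.prod hX) hγ
  have hint_ell : Integrable (fun p => ellS S p.1 p.2) γ :=
    (continuous_uncurry_ellS hS).continuousOn.integrable_of_ae_mem (hX.prod hX) hγ
  have hgap := integral_mono_ae hint_diff hint_ell hle
  have hfeasible := hdom ustar hu
  refine ⟨by linarith, ?_⟩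
  have hsame : ∫ p, (ustar p.1 - ustar p.2) ∂γ = ∫ p, ellS S p.1 p.2 ∂γ := by linarith
  filter_upwards [(integral_eq_iff_of_ae_le hint_diff hint_ell hle).mp hsame] with p hp
  exact hp.symm

/-- complementary slackness: if `u* ∈ U(X,S)` and a feasible
`γ*` achieve equality `∫ u* dμ = ∫ ℓ_S dγ*`, then
`∫ u* dμ = ∫ u* d(γ₁* − γ₂*)` and `ℓ_S(x,y) = u*(x) − u*(y)` `γ*`-a.e. -/
theorem complementary_slackness {n : ℕ} (X S : Set (Fin n → ℝ))
    (hX : IsCompact X) (hXc : Convex ℝ X)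
    (hSne : S.Nonempty) (hScl : IsClosed S) (hSb : Bornology.IsBounded S)
    (μp μm : Measure (Fin n → ℝ)) [IsFiniteMeasure μp] [IsFiniteMeasure μm]
    (hμp : μp Xᶜ = 0) (hμm : μm Xᶜ = 0)
    (ustar : (Fin n → ℝ) → ℝ) (hu : MemU X S ustar)
    (γ : Measure ((Fin n → ℝ) × (Fin n → ℝ))) [IsFiniteMeasure γ]
    (hγX : γ (X ×ˢ X)ᶜ = 0)
    (hdom : ∀ v : (Fin n → ℝ) → ℝ, MemU X S v →
      (∫ x, v x ∂(γ.map Prod.fst)) - (∫ x, v x ∂(γ.map Prod.snd)) ≥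
        (∫ x, v x ∂μp) - (∫ x, v x ∂μm))
    (heq : (∫ x, ustar x ∂μp) - (∫ x, ustar x ∂μm) = ∫ p, ellS S p.1 p.2 ∂γ) :
    ((∫ x, ustar x ∂μp) - (∫ x, ustar x ∂μm) =
      (∫ x, ustar x ∂(γ.map Prod.fst)) - (∫ x, ustar x ∂(γ.map Prod.snd))) ∧
    (∀ᵐ p ∂γ, ellS S p.1 p.2 = ustar p.1 - ustar p.2) :=
  complementary_slackness_general X S hX hScl hSb μp μm ustar hu γ hγX hdom heq
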